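/- arXiv:2201.08316 — 3 statements merged into one kernel-verified Lean document; each statement's English description precedes it below -/
import Mathlib

section
/- Let X and Y be Polish spaces, c : X × Y → [0,∞) continuous, and let f be c-concave on X. If (x_n, y_n)_{n∈ℕ} is a sequence in the c-subdifferential ∂_c f that converges to a point (x, y) ∈ ∂_c f, then f(x_n) → f(x) and f^c(y_n) → f^c(y) as n → ∞. -/
open MeasureTheory Filter Set Topology
open scoped ENNReal NNReal Manifold

noncomputable section

/-- The topological support of a Borel measure: points all of whose open
neighborhoods have positive measure. -/
def msupport {X : Type*} [TopologicalSpace X] [MeasurableSpace X]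
    (μ : Measure X) : Set X :=
  {x | ∀ U : Set X, IsOpen U → x ∈ U → 0 < μ U}

/-- `π` is a coupling (transport plan) between `μ` and `ν`. -/
def IsCoupling {X Y : Type*} [MeasurableSpace X] [MeasurableSpace Y]
    (π : Measure (X × Y)) (μ : Measure X) (ν : Measure Y) : Prop :=
  π.map Prod.fst = μ ∧ π.map Prod.snd = ν

/-- The optimal transport cost `T_c(μ, ν)`. -/
def transportCost {X Y : Type*} [MeasurableSpace X] [MeasurableSpace Y]
    (c : X → Y → ℝ) (μ : Measure X) (ν : Measure Y) : ℝ≥0∞ :=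
  ⨅ (π : Measure (X × Y)) (_ : IsCoupling π μ ν),
    ∫⁻ p, ENNReal.ofReal (c p.1 p.2) ∂π

/-- `π` is an optimal transport plan between `μ` and `ν` for the cost `c`. -/
def IsOptimalPlan {X Y : Type*} [MeasurableSpace X] [MeasurableSpace Y]
    (c : X → Y → ℝ) (μ : Measure X) (ν : Measure Y) (π : Measure (X × Y)) : Prop :=
  IsCoupling π μ ν ∧
    ∫⁻ p, ENNReal.ofReal (c p.1 p.2) ∂π = transportCost c μ ν

/-- The `c`-transform of a function `f : X → ℝ ∪ {-∞}`, namely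
`f^c(y) = inf_x (c(x,y) - f(x))`. -/
def cTransform {X Y : Type*} (c : X → Y → ℝ) (f : X → EReal) : Y → EReal :=
  fun y => ⨅ x, ((c x y : ℝ) : EReal) - f x

/-- The `c`-transform of a function `g : Y → ℝ ∪ {-∞}`, namely
`g^c(x) = inf_y (c(x,y) - g(y))`. -/
def cTransformY {X Y : Type*} (c : X → Y → ℝ) (g : Y → EReal) : X → EReal :=
  fun x => ⨅ y, ((c x y : ℝ) : EReal) - g y

/-- `f : X → ℝ ∪ {-∞}` is `c`-concave on `X`: it is the `c`-transform of some
`g : Y → ℝ ∪ {-∞}` and is not identically `-∞`. -/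
def CConcave {X Y : Type*} (c : X → Y → ℝ) (f : X → EReal) : Prop :=
  (∃ g : Y → EReal, (∀ y, g y ≠ ⊤) ∧ f = cTransformY c g) ∧
    (∀ x, f x ≠ ⊤) ∧ (∃ x, f x ≠ ⊥)

/-- The `c`-subdifferential `∂_c f = {(x,y) | f(x) + f^c(y) = c(x,y)}`. -/
def cSubdiff {X Y : Type*} (c : X → Y → ℝ) (f : X → EReal) : Set (X × Y) :=
  {p | f p.1 + cTransform c f p.2 = ((c p.1 p.2 : ℝ) : EReal)}

/-- `f` is a (generalized) Kantorovich potential for `(c, μ, ν)`: it is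
`c`-concave and satisfies `f ⊕ f^c = c` almost surely with respect to every
optimal transport plan (which, for `T_c(μ,ν) < ∞`, is equivalent to
`∫ (f ⊕ f^c) dπ = T_c(μ,ν)` for every optimal `π`, since `f ⊕ f^c ≤ c`). -/
def IsKantorovichPotential {X Y : Type*} [MeasurableSpace X] [MeasurableSpace Y]
    (c : X → Y → ℝ) (μ : Measure X) (ν : Measure Y) (f : X → EReal) : Prop :=
  CConcave c f ∧
    ∀ π : Measure (X × Y), IsOptimalPlan c μ ν π →
      ∀ᵐ p ∂π, f p.1 + cTransform c f p.2 = ((c p.1 p.2 : ℝ) : EReal)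

/-- The plan `π` induces regularity on `U` with respect to the compact set `K`. -/
def InducesRegularityOn {X Y : Type*} [TopologicalSpace X] [TopologicalSpace Y]
    [MeasurableSpace X] [MeasurableSpace Y]
    (π : Measure (X × Y)) (U : Set X) (K : Set Y) : Prop :=
  IsCompact K ∧
    (Prod.fst '' msupport π) ∩ U = Prod.fst '' (msupport π ∩ (U ×ˢ K))

/-- The plan `π` induces regularity at the point `x ∈ supp μ`: it induces
regularity on some relatively open neighborhood `U ⊆ supp μ` of `x`. -/
def InducesRegularityAt {X Y : Type*} [TopologicalSpace X] [TopologicalSpace Y]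
    [MeasurableSpace X] [MeasurableSpace Y]
    (π : Measure (X × Y)) (μ : Measure X) (x : X) : Prop :=
  ∃ U : Set X, x ∈ U ∧ (∃ V : Set X, IsOpen V ∧ U = V ∩ msupport μ) ∧
    ∃ K : Set Y, InducesRegularityOn π U K

/-- `F` is a decomposition of the set `S` into its connected components. -/
def IsComponentDecomp {X : Type*} [TopologicalSpace X] {ι : Type*}
    (S : Set X) (F : ι → Set X) : Prop :=
  (⋃ i, F i) = S ∧ Pairwise (fun i j => Disjoint (F i) (F j)) ∧
    ∀ i, ∃ x ∈ S, F i = connectedComponentIn S x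

/-- A transport plan `π` is degenerate (with respect to decompositions `F`, `G`
of the supports of `μ` and `ν` into connected components). -/
def IsDegenerate {X Y : Type*} [MeasurableSpace X] [MeasurableSpace Y] {ι κ : Type*}
    (F : ι → Set X) (G : κ → Set Y) (μ : Measure X) (ν : Measure Y)
    (π : Measure (X × Y)) : Prop :=
  ∃ (I' : Set ι) (J' : Set κ),
    0 < (∑' i : I', μ (F i.1)) ∧
    (∑' i : I', μ (F i.1)) = (∑' i : I', ∑' j : J', π (F i.1 ×ˢ G j.1)) ∧
    (∑' i : I', ∑' j : J', π (F i.1 ×ˢ G j.1)) = (∑' j : J', ν (G j.1)) ∧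
    (∑' j : J', ν (G j.1)) < 1

end

/-- On the `c`-subdifferential, both `f` and `f^c` take real (finite) values,
and these values sum to the cost. -/
lemma subdiff_finite_aux {X Y : Type*} (c : X → Y → ℝ) (f : X → EReal)
    (hftop : ∀ x, f x ≠ ⊤) {p : X} {q : Y} (h : (p, q) ∈ cSubdiff c f) :
    ∃ α β : ℝ, f p = (α : EReal) ∧ cTransform c f q = (β : EReal) ∧ α + β = c p q := by
  have hab : f p + cTransform c f q = ((c p q : ℝ) : EReal) := h
  have hpbot : f p ≠ ⊥ := by
    intro hb
    rw [hb, EReal.bot_add] at hab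
    simp at hab
  set α : ℝ := (f p).toReal with hαdef
  have hα : f p = (α : EReal) := (EReal.coe_toReal (hftop p) hpbot).symm
  rw [hα] at hab
  have hqbot : cTransform c f q ≠ ⊥ := by
    intro hb
    rw [hb, EReal.add_bot] at hab
    simp at hab
  have hqtop : cTransform c f q ≠ ⊤ := by
    intro ht
    rw [ht, EReal.coe_add_top] at hab
    simp at hab
  set β : ℝ := (cTransform c f q).toReal with hβdef
  have hβ : cTransform c f q = (β : EReal) := (EReal.coe_toReal hqtop hqbot).symm
  rw [hβ] at hab
  refine ⟨α, β, hα, hβ, ?_⟩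
  exact_mod_cast hab

/-- Upper semicontinuity (along a converging sequence) of an infimum of
continuous functions minus a function that never equals `⊤`. -/
lemma usc_inf_aux {Z W : Type*} [TopologicalSpace Z] (c' : Z → W → ℝ)
    (hc' : ∀ w, Continuous fun z => c' z w) (g : W → EReal)
    (zs : ℕ → Z) (z : Z) (hz : Tendsto zs atTop (nhds z)) (q : ℝ)
    (hq : (⨅ w, ((c' z w : ℝ) : EReal) - g w) < (q : EReal)) :
    ∀ᶠ n in atTop, (⨅ w, ((c' (zs n) w : ℝ) : EReal) - g w) < (q : EReal) := by
  obtain ⟨w, hw⟩ := iInf_lt_iff.mp hq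
  by_cases hgtop : g w = ⊤
  · -- then the `w`-term is `⊥` for every `n`, so the infimum is always `< q`
    filter_upwards with n
    refine lt_of_le_of_lt (iInf_le _ w) ?_
    rw [hgtop]
    calc ((c' (zs n) w : ℝ) : EReal) - ⊤ = ⊥ := by
          simp [sub_eq_add_neg]
      _ < (q : EReal) := EReal.bot_lt_coe q
  have hgbot : g w ≠ ⊥ := by
    intro hb
    rw [hb] at hw
    have : ((c' z w : ℝ) : EReal) - ⊥ = ⊤ := by
      simp [sub_eq_add_neg]
    rw [this] at hw
    exact absurd hw (by simp)
  set γ : ℝ := (g w).toReal with hγdef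
  have hγ : g w = (γ : EReal) := (EReal.coe_toReal hgtop hgbot).symm
  rw [hγ, ← EReal.coe_sub, EReal.coe_lt_coe_iff] at hw
  have htend : Tendsto (fun n => c' (zs n) w - γ) atTop (nhds (c' z w - γ)) :=
    (((hc' w).tendsto z).comp hz).sub_const γ
  have hev : ∀ᶠ n in atTop, c' (zs n) w - γ < q :=
    (tendsto_order.1 htend).2 q hw
  filter_upwards [hev] with n hn
  refine lt_of_le_of_lt (iInf_le _ w) ?_
  rw [hγ, ← EReal.coe_sub, EReal.coe_lt_coe_iff]
  exact hn

/-- Continuity of Kantorovich potentials along converging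
sequences in the `c`-subdifferential. -/
theorem stmt0 {X Y : Type*}
    [TopologicalSpace X] [PolishSpace X] [TopologicalSpace Y] [PolishSpace Y]
    (c : X → Y → ℝ) (hc0 : ∀ x y, 0 ≤ c x y)
    (hccont : Continuous fun p : X × Y => c p.1 p.2)
    (f : X → EReal) (hf : CConcave c f)
    (xs : ℕ → X) (ys : ℕ → Y)
    (hmem : ∀ n, (xs n, ys n) ∈ cSubdiff c f)
    (x : X) (y : Y) (hxy : (x, y) ∈ cSubdiff c f)
    (hconv : Tendsto (fun n => (xs n, ys n)) atTop (nhds (x, y))) :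
    Tendsto (fun n => f (xs n)) atTop (nhds (f x)) ∧
      Tendsto (fun n => cTransform c f (ys n)) atTop (nhds (cTransform c f y)) := by
  obtain ⟨⟨g, hgtop, hfg⟩, hftop, -⟩ := hf
  have hxs : Tendsto xs atTop (nhds x) := (continuous_fst.tendsto _).comp hconv
  have hys : Tendsto ys atTop (nhds y) := (continuous_snd.tendsto _).comp hconv
  obtain ⟨α, β, hα, hβ, hαβ⟩ := subdiff_finite_aux c f hftop hxy
  have hfin := fun n => subdiff_finite_aux c f hftop (hmem n)
  choose A B hA hB hAB using hfin
  -- upper semicontinuity of f along (xs n)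
  have uscf : ∀ q : ℝ, f x < (q : EReal) → ∀ᶠ n in atTop, f (xs n) < (q : EReal) := by
    intro q hq
    rw [hfg] at hq ⊢
    exact usc_inf_aux c
      (fun w => hccont.comp (continuous_id.prodMk continuous_const)) g xs x hxs q hq
  -- upper semicontinuity of f^c along (ys n)
  have uscfc : ∀ q : ℝ, cTransform c f y < (q : EReal) →
      ∀ᶠ n in atTop, cTransform c f (ys n) < (q : EReal) := by
    intro q hq
    exact usc_inf_aux (fun z w => c w z)
      (fun w => hccont.comp (continuous_const.prodMk continuous_id)) f ys y hys q hq
  have hcconv : Tendsto (fun n => c (xs n) (ys n)) atTop (nhds (c x y)) :=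
    (hccont.tendsto (x, y)).comp hconv
  -- real-valued convergence of A to α
  have evA_ub : ∀ ε : ℝ, 0 < ε → ∀ᶠ n in atTop, A n < α + ε := by
    intro ε hε
    have h1 : f x < ((α + ε : ℝ) : EReal) := by
      rw [hα]; exact_mod_cast (by linarith : α < α + ε)
    filter_upwards [uscf (α + ε) h1] with n hn
    rw [hA n] at hn
    exact_mod_cast hn
  have evB_ub : ∀ ε : ℝ, 0 < ε → ∀ᶠ n in atTop, B n < β + ε := by
    intro ε hε
    have h1 : cTransform c f y < ((β + ε : ℝ) : EReal) := by
      rw [hβ]; exact_mod_cast (by linarith : β < β + ε)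
    filter_upwards [uscfc (β + ε) h1] with n hn
    rw [hB n] at hn
    exact_mod_cast hn
  have evc : ∀ ε : ℝ, 0 < ε → ∀ᶠ n in atTop, α + β - ε < c (xs n) (ys n) := by
    intro ε hε
    have : α + β - ε < c x y := by rw [← hαβ]; linarith
    exact (tendsto_order.1 hcconv).1 _ this
  have hAconv : Tendsto A atTop (nhds α) := by
    refine tendsto_order.2 ⟨?_, ?_⟩
    · intro r hr
      have hε : (0 : ℝ) < (α - r) / 2 := by linarith
      filter_upwards [evB_ub _ hε, evc _ hε] with n h1 h2
      have := hAB n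
      linarith
    · intro r hr
      have hε : (0 : ℝ) < r - α := by linarith
      filter_upwards [evA_ub _ hε] with n h1
      linarith
  have hBconv : Tendsto B atTop (nhds β) := by
    refine tendsto_order.2 ⟨?_, ?_⟩
    · intro r hr
      have hε : (0 : ℝ) < (β - r) / 2 := by linarith
      filter_upwards [evA_ub _ hε, evc _ hε] with n h1 h2
      have := hAB n
      linarith
    · intro r hr
      have hε : (0 : ℝ) < r - β := by linarith
      filter_upwards [evB_ub _ hε] with n h1
      linarith
  constructor
  · have : Tendsto (fun n => ((A n : ℝ) : EReal)) atTop (nhds ((α : ℝ) : EReal)) := by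
      exact_mod_cast EReal.tendsto_coe.mpr hAconv
    rw [hα]
    convert this using 2 with n
    exact hA n
  · have : Tendsto (fun n => ((B n : ℝ) : EReal)) atTop (nhds ((β : ℝ) : EReal)) := by
      exact_mod_cast EReal.tendsto_coe.mpr hBconv
    rw [hβ]
    convert this using 2 with n
    exact hB n
end

section
/- Let X and Y be Polish, μ ∈ P(X), ν ∈ P(Y), and c : X × Y → [0,∞) continuous with T_c(μ,ν) < ∞. Let π ∈ C(μ,ν) be an optimal transport plan and f ∈ S_c(μ,ν) a Kantorovich potential. If π induces regularity on a relatively open set U ⊂ supp μ with respect to a compact set K ⊂ Y, then U ⊂ pr_X(supp π), f(x) = inf_{y∈K} (c(x,y) − f^c(y)) for all x ∈ U, and the restriction of f to supp μ is continuous at every point of U. -/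
open MeasureTheory Filter Set Topology
open scoped ENNReal NNReal Manifold

/-!
On `supp π` a Kantorovich potential satisfies `f(x) + f^c(y) = c(x, y)`: this equality set is
closed, because `f` and `f^c` are infima of continuous functions, hence upper semicontinuous,
and it carries every optimal plan. The projection `pr_X(supp π)` is dense in `supp μ`, and on `U`
each of its points has a partner in the compact set `K`; as projecting a closed set along a
compact factor gives a closed set, every `x ∈ U` has a partner `y ∈ K` with `(x, y) ∈ supp π`.
This yields `f = inf_{y ∈ K} (c(·, y) - f^c(y))` on `U`. An infimum over a compact set of a
jointly continuous cost is lower semicontinuous, which together with upper semicontinuity gives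
continuity.
-/

section Support

variable {X Y : Type*} [TopologicalSpace X] [MeasurableSpace X] [TopologicalSpace Y]
  [MeasurableSpace Y]

theorem msupport_eq_support (μ : Measure X) : msupport μ = μ.support := by
  rw [Measure.support_eq_forall_isOpen]
  ext x
  exact forall_congr' fun u => ⟨fun h hx hu => h hu hx, fun h hu hx => h hx hu⟩

theorem isClosed_msupport (μ : Measure X) : IsClosed (msupport μ) :=
  msupport_eq_support μ ▸ Measure.isClosed_support

theorem fst_mem_msupport_map [OpensMeasurableSpace X] {π : Measure (X × Y)} {p : X × Y}
    (hp : p ∈ msupport π) : p.1 ∈ msupport (π.map Prod.fst) := by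
  intro W hW hpW
  rw [Measure.map_apply measurable_fst hW.measurableSet]
  exact hp _ (hW.preimage continuous_fst) hpW

theorem msupport_map_fst_subset_closure [OpensMeasurableSpace X]
    [HereditarilyLindelofSpace (X × Y)] (π : Measure (X × Y)) :
    msupport (π.map Prod.fst) ⊆ closure (Prod.fst '' msupport π) := by
  intro x hx
  rw [mem_closure_iff]
  intro W hW hxW
  have hpos : 0 < π (Prod.fst ⁻¹' W) := by
    simpa [Measure.map_apply measurable_fst hW.measurableSet] using hx W hW hxW
  obtain ⟨p, hpW, hp⟩ := Measure.nonempty_inter_support_of_pos hpos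
  exact ⟨p.1, hpW, p, (msupport_eq_support π).symm ▸ hp, rfl⟩

end Support

theorem isClosed_setOf_exists_mem_of_isCompact {X Y : Type*} [TopologicalSpace X]
    [TopologicalSpace Y] {K : Set Y} (hK : IsCompact K) {C : Set (X × Y)} (hC : IsClosed C) :
    IsClosed {x | ∃ y ∈ K, (x, y) ∈ C} := by
  have : CompactSpace K := isCompact_iff_compactSpace.1 hK
  have hC' : IsClosed ((Prod.map id Subtype.val : X × K → X × Y) ⁻¹' C) :=
    hC.preimage (continuous_id.prodMap continuous_subtype_val)
  convert isClosedMap_fst_of_compactSpace _ hC' using 1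
  ext x
  simp

theorem LowerSemicontinuous.isClosed_setOf_le {α γ : Type*} [TopologicalSpace α] [LinearOrder γ]
    [DenselyOrdered γ] {f g : α → γ} (hf : LowerSemicontinuous f) (hg : UpperSemicontinuous g) :
    IsClosed {x | f x ≤ g x} := by
  refine isOpen_compl_iff.1 (isOpen_iff_mem_nhds.2 fun x hx => ?_)
  obtain ⟨b, hgb, hbf⟩ := exists_between (not_le.1 hx)
  filter_upwards [hf x b hbf, hg x b hgb] with x' h1 h2
  exact not_le.2 (h2.trans h1)

theorem InducesRegularityOn.exists_mem_msupport {X Y : Type*} [TopologicalSpace X]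
    [MeasurableSpace X] [OpensMeasurableSpace X] [TopologicalSpace Y] [MeasurableSpace Y]
    [HereditarilyLindelofSpace (X × Y)] {π : Measure (X × Y)} {U V : Set X} {K : Set Y}
    (hreg : InducesRegularityOn π U K) (hV : IsOpen V)
    (hU : U = V ∩ msupport (π.map Prod.fst)) {x : X} (hx : x ∈ U) :
    ∃ y ∈ K, (x, y) ∈ msupport π := by
  have hclosed : IsClosed {x | ∃ y ∈ K, (x, y) ∈ msupport π} :=
    isClosed_setOf_exists_mem_of_isCompact hreg.1 (isClosed_msupport π)
  have hdense : U ⊆ closure (V ∩ Prod.fst '' msupport π) :=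
    hU ▸ (inter_subset_inter_right V (msupport_map_fst_subset_closure π)).trans hV.inter_closure
  refine hclosed.closure_subset_iff.2 ?_ (hdense hx)
  rintro _ ⟨haV, p, hp, rfl⟩
  have hpU : p.1 ∈ Prod.fst '' msupport π ∩ U :=
    ⟨⟨p, hp, rfl⟩, hU ▸ ⟨haV, fst_mem_msupport_map hp⟩⟩
  rw [hreg.2] at hpU
  obtain ⟨q, ⟨hq, -, hqK⟩, hqp⟩ := hpU
  exact ⟨q.2, hqK, hqp ▸ hq⟩

theorem EReal.continuous_coe_sub_const (a : EReal) : Continuous fun r : ℝ => (r : EReal) - a := by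
  induction a using EReal.rec with
  | bot => simpa only [EReal.coe_sub_bot] using continuous_const
  | top => simpa only [EReal.sub_top] using continuous_const
  | coe s =>
    simp only [← EReal.coe_sub]
    exact continuous_coe_real_ereal.comp (continuous_sub_right s)

theorem EReal.coe_le_sub_of_coe_lt_sub {a b u v : ℝ} {e : EReal} (h : (b : EReal) < u - e)
    (huv : u - (b - a) < v) : (a : EReal) ≤ v - e := by
  induction e using EReal.rec with
  | bot => simp
  | top => simp at h
  | coe r =>
    rw [← EReal.coe_sub] at h ⊢
    exact_mod_cast (by linarith [EReal.coe_lt_coe_iff.1 h] : a ≤ v - r)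

section CTransform

variable {X Y : Type*} {c : X → Y → ℝ}

theorem add_cTransform_le (f : X → EReal) (x : X) (y : Y) :
    f x + cTransform c f y ≤ c x y := by
  rw [add_comm, ← EReal.le_sub_iff_add_le (.inr (EReal.coe_ne_bot _)) (.inr (EReal.coe_ne_top _))]
  exact iInf_le _ x

theorem le_sub_cTransform (f : X → EReal) (x : X) (y : Y) :
    f x ≤ c x y - cTransform c f y :=
  (EReal.le_sub_iff_add_le (.inr (EReal.coe_ne_bot _)) (.inr (EReal.coe_ne_top _))).2
    (add_cTransform_le f x y)

theorem CConcave.cTransform_ne_top {f : X → EReal} (hf : CConcave c f) (y : Y) :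
    cTransform c f y ≠ ⊤ := by
  obtain ⟨x, hx⟩ := hf.2.2
  refine ne_top_of_le_ne_top ?_ (iInf_le _ x)
  rw [sub_eq_add_neg]
  exact EReal.add_ne_top (EReal.coe_ne_top _) (EReal.neg_eq_top_iff.not.2 hx)

theorem upperSemicontinuous_cTransformY [TopologicalSpace X] (hc : ∀ y, Continuous fun x => c x y)
    (g : Y → EReal) : UpperSemicontinuous (cTransformY c g) :=
  upperSemicontinuous_iInf fun y =>
    ((EReal.continuous_coe_sub_const (g y)).comp (hc y)).upperSemicontinuous

theorem upperSemicontinuous_cTransform [TopologicalSpace Y] (hc : ∀ x, Continuous (c x))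
    (f : X → EReal) : UpperSemicontinuous (cTransform c f) :=
  upperSemicontinuous_iInf fun x =>
    ((EReal.continuous_coe_sub_const (f x)).comp (hc x)).upperSemicontinuous

theorem CConcave.upperSemicontinuous [TopologicalSpace X] {f : X → EReal} (hf : CConcave c f)
    (hc : ∀ y, Continuous fun x => c x y) : UpperSemicontinuous f := by
  obtain ⟨⟨g, -, rfl⟩, -⟩ := hf
  exact upperSemicontinuous_cTransformY hc g

theorem CConcave.isClosed_cSubdiff [TopologicalSpace X] [TopologicalSpace Y] {f : X → EReal}
    (hf : CConcave c f) (hc : Continuous fun p : X × Y => c p.1 p.2) :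
    IsClosed (cSubdiff c f) := by
  have hsum : UpperSemicontinuous fun p : X × Y => f p.1 + cTransform c f p.2 :=
    UpperSemicontinuous.add'
      ((hf.upperSemicontinuous fun y => hc.comp (.prodMk_left y)).comp continuous_fst)
      ((upperSemicontinuous_cTransform (fun x => hc.comp (.prodMk_right x)) f).comp
        continuous_snd)
      fun p => EReal.continuousAt_add (.inl (hf.2.1 _)) (.inr (hf.cTransform_ne_top _))
  have hcoe : LowerSemicontinuous fun p : X × Y => ((c p.1 p.2 : ℝ) : EReal) :=
    (continuous_coe_real_ereal.comp hc).lowerSemicontinuous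
  convert hcoe.isClosed_setOf_le hsum using 1
  ext p
  exact (add_cTransform_le f p.1 p.2).ge_iff_eq.symm

theorem CConcave.eq_iInf_sub_cTransform {f : X → EReal} (hf : CConcave c f) {K : Set Y} {x : X}
    {y : Y} (hy : y ∈ K) (hxy : (x, y) ∈ cSubdiff c f) :
    f x = ⨅ y : K, ((c x y : ℝ) : EReal) - cTransform c f y := by
  refine le_antisymm (le_iInf fun y => le_sub_cTransform (c := c) f x y.1)
    ((iInf_le _ (⟨y, hy⟩ : K)).trans ?_)
  rw [EReal.sub_le_iff_le_add (.inr (hf.2.1 x)) (.inl (hf.cTransform_ne_top y))]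
  exact ge_of_eq hxy

theorem lowerSemicontinuous_iInf_sub_of_isCompact [TopologicalSpace X] [TopologicalSpace Y]
    (hc : Continuous fun p : X × Y => c p.1 p.2) {K : Set Y} (hK : IsCompact K) (g : Y → EReal) :
    LowerSemicontinuous fun x => ⨅ y : K, ((c x y : ℝ) : EReal) - g y := by
  intro x₀ z hz
  obtain ⟨a, hza, ha⟩ := EReal.lt_iff_exists_real_btwn.1 hz
  obtain ⟨b, hab, hb⟩ := EReal.lt_iff_exists_real_btwn.1 ha
  have huniform : ∀ᶠ x in 𝓝 x₀, ∀ y ∈ K, c x₀ y - (b - a) < c x y :=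
    hK.eventually_forall_of_forall_eventually fun y _ =>
      ContinuousAt.eventually_lt (by fun_prop) hc.continuousAt
        (by simpa using EReal.coe_lt_coe_iff.1 hab)
  filter_upwards [huniform] with x hx
  exact hza.trans_le <| le_iInf fun y =>
    EReal.coe_le_sub_of_coe_lt_sub (hb.trans_le (iInf_le _ y)) (hx y y.2)

end CTransform

theorem IsKantorovichPotential.msupport_subset_cSubdiff {X Y : Type*} [TopologicalSpace X]
    [MeasurableSpace X] [TopologicalSpace Y] [MeasurableSpace Y] {c : X → Y → ℝ}
    {μ : Measure X} {ν : Measure Y} {f : X → EReal} (hf : IsKantorovichPotential c μ ν f)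
    (hc : Continuous fun p : X × Y => c p.1 p.2) {π : Measure (X × Y)}
    (hπ : IsOptimalPlan c μ ν π) : msupport π ⊆ cSubdiff c f :=
  msupport_eq_support π ▸ Measure.support_subset_of_isClosed (hf.1.isClosed_cSubdiff hc) (hf.2 π hπ)

theorem stmt1_general {X Y : Type*}
    [TopologicalSpace X] [PolishSpace X] [MeasurableSpace X] [BorelSpace X]
    [TopologicalSpace Y] [PolishSpace Y] [MeasurableSpace Y]
    (c : X → Y → ℝ)
    (hccont : Continuous fun p : X × Y => c p.1 p.2)
    (μ : Measure X) (ν : Measure Y)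
    (π : Measure (X × Y)) (hπ : IsOptimalPlan c μ ν π)
    (f : X → EReal) (hf : IsKantorovichPotential c μ ν f)
    (U : Set X)
    (hUopen : ∃ V : Set X, IsOpen V ∧ U = V ∩ msupport μ)
    (K : Set Y) (hreg : InducesRegularityOn π U K) :
    U ⊆ Prod.fst '' msupport π ∧
      (∀ x ∈ U, f x = ⨅ y : K, (((c x y.1 : ℝ) : EReal) - cTransform c f y.1)) ∧
      (∀ x ∈ U, ContinuousWithinAt f (msupport μ) x) := by
  obtain ⟨V, hV, hUV⟩ := hUopen
  have hpartner : ∀ x ∈ U, ∃ y ∈ K, (x, y) ∈ msupport π :=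
    fun x hx => hreg.exists_mem_msupport hV (hπ.1.1 ▸ hUV) hx
  have hformula : ∀ x ∈ U, f x = ⨅ y : K, (((c x y.1 : ℝ) : EReal) - cTransform c f y.1) := by
    intro x hx
    obtain ⟨y, hyK, hxy⟩ := hpartner x hx
    exact hf.1.eq_iInf_sub_cTransform hyK (hf.msupport_subset_cSubdiff hccont hπ hxy)
  refine ⟨fun x hx => ?_, hformula, fun x hx => ?_⟩
  · obtain ⟨y, -, hxy⟩ := hpartner x hx
    exact ⟨(x, y), hxy, rfl⟩
  · have hUnhds : U ∈ 𝓝[msupport μ] x :=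
      hUV ▸ inter_mem (mem_nhdsWithin_of_mem_nhds (hV.mem_nhds (hUV ▸ hx).1)) self_mem_nhdsWithin
    rw [continuousWithinAt_iff_lower_upperSemicontinuousWithinAt]
    refine ⟨?_, (hf.1.upperSemicontinuous fun y => hccont.comp (.prodMk_left y))
      |>.upperSemicontinuousWithinAt _ x⟩
    refine (lowerSemicontinuous_iInf_sub_of_isCompact hccont hreg.1 (cTransform c f))
      |>.lowerSemicontinuousWithinAt _ x |>.congr_of_eventuallyEq (hUV ▸ hx).2 ?_
    filter_upwards [hUnhds] with x' hx' using (hformula x' hx').symm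

/-- If an optimal plan induces regularity on a relatively open
set `U ⊆ supp μ` w.r.t. a compact `K`, then `U ⊆ pr_X(supp π)`, the potential is
given by an infimum over `K` on `U`, and `f|_{supp μ}` is continuous on `U`. -/
theorem stmt1 {X Y : Type*}
    [TopologicalSpace X] [PolishSpace X] [MeasurableSpace X] [BorelSpace X]
    [TopologicalSpace Y] [PolishSpace Y] [MeasurableSpace Y] [BorelSpace Y]
    (c : X → Y → ℝ) (hc0 : ∀ x y, 0 ≤ c x y)
    (hccont : Continuous fun p : X × Y => c p.1 p.2)
    (μ : Measure X) (ν : Measure Y) [IsProbabilityMeasure μ] [IsProbabilityMeasure ν]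
    (hT : transportCost c μ ν < ⊤)
    (π : Measure (X × Y)) (hπ : IsOptimalPlan c μ ν π)
    (f : X → EReal) (hf : IsKantorovichPotential c μ ν f)
    (U : Set X) (hUsub : U ⊆ msupport μ)
    (hUopen : ∃ V : Set X, IsOpen V ∧ U = V ∩ msupport μ)
    (K : Set Y) (hreg : InducesRegularityOn π U K) :
    U ⊆ Prod.fst '' msupport π ∧
      (∀ x ∈ U, f x = ⨅ y : K, (((c x y.1 : ℝ) : EReal) - cTransform c f y.1)) ∧
      (∀ x ∈ U, ContinuousWithinAt f (msupport μ) x) :=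
  stmt1_general c hccont μ ν π hπ f hf U hUopen K hreg
end

section
/- Let X and Y be Polish, c : X × Y → [0,∞) continuous, μ ∈ P(X), ν ∈ P(Y) with T_c(μ,ν) < ∞, let π ∈ C(μ,ν) be an optimal plan, and let X̃ ⊂ X be closed with μ(X̃) > 0. Then every Kantorovich potential f ∈ S_c(μ,ν) admits a Kantorovich potential f̃ ∈ S_{c_X̃}(μ_X̃, ν_X̃) of the X̃-restricted problem that agrees with f on pr_X(supp π) ∩ X̃. -/
open MeasureTheory Filter Set Topology
open scoped ENNReal NNReal Manifold

/-!
The restriction `f|_X̃` stays `c`-concave, and on the `c`-subdifferential it keeps its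
`c`-transform: if `f x + f^c y = c x y` with `x ∈ X̃`, the infimum defining `(f|_X̃)^c y` is
attained at `x`. For an optimal plan `π'` of the restricted problem, `μ(X̃) π' + π|_{X̃ᶜ × Y}` is
again a coupling of `μ` and `ν`, and since `π|_{X̃ × Y} / μ(X̃)` competes with `π'`, it costs at
most as much as `π`. So the glued plan is optimal, `f ⊕ f^c = c` holds almost surely for it, hence
`π'`-almost surely, and by the first remark this is `f|_X̃ ⊕ (f|_X̃)^c = c_X̃`.
-/

section CTransform

variable {X Y : Type*} {c : X → Y → ℝ} {f : X → EReal}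

lemma ne_bot_of_mem_cSubdiff {p : X × Y} (hp : p ∈ cSubdiff c f) : f p.1 ≠ ⊥ := by
  intro h
  replace hp : f p.1 + cTransform c f p.2 = c p.1 p.2 := hp
  rw [h, EReal.bot_add] at hp
  exact EReal.bot_ne_coe _ hp

lemma ne_top_of_mem_cSubdiff {p : X × Y} (hp : p ∈ cSubdiff c f) : f p.1 ≠ ⊤ := by
  intro h
  have hbot : cTransform c f p.2 = ⊥ :=
    le_bot_iff.1 <| (iInf_le _ p.1).trans_eq (by rw [h, EReal.sub_top])
  replace hp : f p.1 + cTransform c f p.2 = c p.1 p.2 := hp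
  rw [hbot, EReal.add_bot] at hp
  exact EReal.bot_ne_coe _ hp

lemma CConcave.subtype {s : Set X} (hf : CConcave c f) (hne : ∃ x : s, f x ≠ ⊥) :
    CConcave (fun (x : s) y => c x y) (fun x => f x) := by
  obtain ⟨⟨g, hg, rfl⟩, hf_top, -⟩ := hf
  exact ⟨⟨g, hg, rfl⟩, fun x => hf_top x, hne⟩

lemma cTransform_le_cTransform_subtype (s : Set X) (y : Y) :
    cTransform c f y ≤ cTransform (fun (x : s) y => c x y) (fun x => f x) y :=
  le_iInf fun x => iInf_le (fun x' => ((c x' y : ℝ) : EReal) - f x') x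

lemma cTransform_subtype_eq_of_mem_cSubdiff {s : Set X} {p : X × Y} (hp : p ∈ cSubdiff c f)
    (hs : p.1 ∈ s) :
    cTransform (fun (x : s) y => c x y) (fun x => f x) p.2 = cTransform c f p.2 := by
  have hp' : f p.1 + cTransform c f p.2 = c p.1 p.2 := hp
  lift f p.1 to ℝ using ⟨ne_top_of_mem_cSubdiff hp, ne_bot_of_mem_cSubdiff hp⟩ with a ha
  refine le_antisymm ?_ (cTransform_le_cTransform_subtype s p.2)
  rw [← EReal.add_sub_cancel_left (a := cTransform c f p.2) (b := a), hp', ha]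
  exact iInf_le (fun x : s => ((c x p.2 : ℝ) : EReal) - f x) ⟨p.1, hs⟩

lemma mk_mem_cSubdiff_subtype {s : Set X} {p : X × Y} (hp : p ∈ cSubdiff c f) (hs : p.1 ∈ s) :
    ((⟨p.1, hs⟩ : s), p.2) ∈ cSubdiff (fun (x : s) y => c x y) (fun x => f x) := by
  show f p.1 + _ = _
  rw [cTransform_subtype_eq_of_mem_cSubdiff hp hs]
  exact hp

end CTransform

section Gluing

variable {X Y : Type*} [MeasurableSpace X] [MeasurableSpace Y] {s : Set X}
  {μ : Measure X} {ν : Measure Y} {π : Measure (X × Y)}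

local notation "ιₛ" => Prod.map ((↑) : s → X) (id : Y → Y)

lemma IsCoupling.smul (hπ : IsCoupling π μ ν) (a : ℝ≥0∞) :
    IsCoupling (a • π) (a • μ) (a • ν) := by
  rw [IsCoupling, Measure.map_smul, Measure.map_smul, hπ.1, hπ.2]
  exact ⟨rfl, rfl⟩

lemma transportCost_le_lintegral (c : X → Y → ℝ) (hπ : IsCoupling π μ ν) :
    transportCost c μ ν ≤ ∫⁻ p, ENNReal.ofReal (c p.1 p.2) ∂π :=
  iInf₂_le π hπ

lemma measurableEmbedding_prodMap_subtype (hs : MeasurableSet s) : MeasurableEmbedding ιₛ :=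
  (MeasurableEmbedding.subtype_coe hs).prodMap MeasurableEmbedding.id

omit [MeasurableSpace X] [MeasurableSpace Y] in
lemma range_prodMap_subtype : range ιₛ = s ×ˢ univ := by
  rw [range_prodMap, Subtype.range_coe, range_id]

lemma map_prodMap_subtype_comap (hs : MeasurableSet s) (π : Measure (X × Y)) :
    (π.comap ιₛ).map ιₛ = π.restrict (s ×ˢ univ) := by
  rw [(measurableEmbedding_prodMap_subtype hs).map_comap, range_prodMap_subtype]

lemma IsCoupling.comap_prodMap_subtype (hs : MeasurableSet s) (hπ : IsCoupling π μ ν) :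
    IsCoupling (π.comap ιₛ) (μ.comap (↑)) ((π.restrict (s ×ˢ univ)).map Prod.snd) := by
  have hval := MeasurableEmbedding.subtype_coe hs
  have he := measurableEmbedding_prodMap_subtype (Y := Y) hs
  constructor
  · rw [← hval.comap_map (Measure.map _ _), Measure.map_map hval.measurable measurable_fst,
      show Subtype.val ∘ Prod.fst = Prod.fst ∘ ιₛ from rfl,
      ← Measure.map_map measurable_fst he.measurable, map_prodMap_subtype_comap hs, prod_univ,
      ← Measure.restrict_map measurable_fst hs, hπ.1, hval.comap_restrict,
      Subtype.coe_preimage_self, Measure.restrict_univ]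
  · rw [← map_prodMap_subtype_comap hs, Measure.map_map measurable_snd he.measurable]
    rfl

lemma IsCoupling.glue (hs : MeasurableSet s) (hπ : IsCoupling π μ ν) {π' : Measure (s × Y)}
    (hπ' : IsCoupling π' (μ.comap (↑)) ((π.restrict (s ×ˢ univ)).map Prod.snd)) :
    IsCoupling (π'.map ιₛ + π.restrict (s ×ˢ univ)ᶜ) μ ν := by
  have hval := MeasurableEmbedding.subtype_coe hs
  have he := measurableEmbedding_prodMap_subtype (Y := Y) hs
  constructor
  · rw [Measure.map_add _ _ measurable_fst, Measure.map_map measurable_fst he.measurable,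
      show Prod.fst ∘ ιₛ = Subtype.val ∘ Prod.fst from rfl,
      ← Measure.map_map hval.measurable measurable_fst, hπ'.1, hval.map_comap, Subtype.range_coe,
      prod_univ, ← preimage_compl, ← Measure.restrict_map measurable_fst hs.compl, hπ.1,
      Measure.restrict_add_restrict_compl hs]
  · rw [Measure.map_add _ _ measurable_snd, Measure.map_map measurable_snd he.measurable]
    change π'.map Prod.snd + _ = _
    rw [hπ'.2, ← Measure.map_add _ _ measurable_snd,
      Measure.restrict_add_restrict_compl (hs.prod .univ), hπ.2]

theorem IsOptimalPlan.glue {c : X → Y → ℝ} (hs : MeasurableSet s) (hμs₀ : μ s ≠ 0)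
    (hμs : μ s ≠ ∞) (hπ : IsOptimalPlan c μ ν π) {π' : Measure (s × Y)}
    (hπ' : IsOptimalPlan (fun (x : s) y => c x y) ((μ s)⁻¹ • μ.comap (↑))
      ((μ s)⁻¹ • (π.restrict (s ×ˢ univ)).map Prod.snd) π') :
    IsOptimalPlan c μ ν ((μ s • π').map ιₛ + π.restrict (s ×ˢ univ)ᶜ) := by
  have he := measurableEmbedding_prodMap_subtype (Y := Y) hs
  have hinv : μ s * (μ s)⁻¹ = 1 := ENNReal.mul_inv_cancel hμs₀ hμs
  have hcoup : IsCoupling ((μ s • π').map ιₛ + π.restrict (s ×ˢ univ)ᶜ) μ ν := by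
    refine hπ.1.glue hs ?_
    simpa only [smul_smul, hinv, one_smul] using hπ'.1.smul (μ s)
  refine ⟨hcoup, le_antisymm ?_ (transportCost_le_lintegral c hcoup)⟩
  set C : X × Y → ℝ≥0∞ := fun p => ENNReal.ofReal (c p.1 p.2)
  have hπ'_le : ∫⁻ q, C (ιₛ q) ∂π' ≤ (μ s)⁻¹ * ∫⁻ p, C p ∂π.restrict (s ×ˢ univ) := by
    rw [← map_prodMap_subtype_comap hs, he.lintegral_map, ← smul_eq_mul,
      ← lintegral_smul_measure]
    exact hπ'.2.trans_le <| transportCost_le_lintegral _ ((hπ.1.comap_prodMap_subtype hs).smul _)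
  calc ∫⁻ p, C p ∂((μ s • π').map ιₛ + π.restrict (s ×ˢ univ)ᶜ)
      = μ s * ∫⁻ q, C (ιₛ q) ∂π' + ∫⁻ p, C p ∂π.restrict (s ×ˢ univ)ᶜ := by
        rw [lintegral_add_measure, he.lintegral_map, lintegral_smul_measure, smul_eq_mul]
    _ ≤ μ s * ((μ s)⁻¹ * ∫⁻ p, C p ∂π.restrict (s ×ˢ univ))
          + ∫⁻ p, C p ∂π.restrict (s ×ˢ univ)ᶜ := by
        gcongr
    _ = ∫⁻ p, C p ∂π := by
        rw [← mul_assoc, hinv, one_mul, ← lintegral_add_measure,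
          Measure.restrict_add_restrict_compl (hs.prod .univ)]
    _ = transportCost c μ ν := hπ.2

lemma exists_ne_bot_of_ae_mem_cSubdiff {c : X → Y → ℝ} {f : X → EReal}
    (hf : ∀ᵐ p ∂π, p ∈ cSubdiff c f) (hπs : π (s ×ˢ univ) ≠ 0) : ∃ x : s, f x ≠ ⊥ := by
  obtain ⟨p, hps, hp⟩ := Measure.exists_mem_of_measure_ne_zero_of_ae hπs (ae_restrict_of_ae hf)
  exact ⟨⟨p.1, hps.1⟩, ne_bot_of_mem_cSubdiff hp⟩

theorem IsKantorovichPotential.subtype {c : X → Y → ℝ} {f : X → EReal} (hs : MeasurableSet s)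
    (hμs₀ : μ s ≠ 0) (hμs : μ s ≠ ∞) (hπ : IsOptimalPlan c μ ν π)
    (hf : IsKantorovichPotential c μ ν f) :
    IsKantorovichPotential (fun (x : s) y => c x y) ((μ s)⁻¹ • μ.comap (↑))
      ((μ s)⁻¹ • (π.restrict (s ×ˢ univ)).map Prod.snd) (fun x => f x) := by
  have he := measurableEmbedding_prodMap_subtype (Y := Y) hs
  have hπs : π (s ×ˢ univ) = μ s := by
    rw [prod_univ, ← Measure.map_apply measurable_fst hs, hπ.1.1]
  refine ⟨hf.1.subtype (exists_ne_bot_of_ae_mem_cSubdiff (hf.2 π hπ) (hπs ▸ hμs₀)),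
    fun π' hπ' => ?_⟩
  have hglued := (ae_add_measure_iff.1 (hf.2 _ (hπ.glue hs hμs₀ hμs hπ'))).1
  rw [he.ae_map_iff, Measure.ae_ennreal_smul_measure_iff hμs₀] at hglued
  exact hglued.mono fun q hq => mk_mem_cSubdiff_subtype hq q.1.2

end Gluing

theorem stmt4_general {X Y : Type*}
    [TopologicalSpace X] [MeasurableSpace X] [BorelSpace X]
    [TopologicalSpace Y] [MeasurableSpace Y]
    (c : X → Y → ℝ)
    (μ : Measure X) (ν : Measure Y) [IsProbabilityMeasure μ]
    (π : Measure (X × Y)) (hπ : IsOptimalPlan c μ ν π)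
    (Xt : Set X) (hXtc : IsClosed Xt) (hXt : 0 < μ Xt)
    (f : X → EReal) (hf : IsKantorovichPotential c μ ν f) :
    ∃ ft : ↥Xt → EReal,
      IsKantorovichPotential (fun (x : ↥Xt) (y : Y) => c x.1 y)
        ((μ Xt)⁻¹ • Measure.comap Subtype.val μ)
        ((μ Xt)⁻¹ • Measure.map Prod.snd (π.restrict (Xt ×ˢ Set.univ))) ft ∧
      ∀ p : X × Y, p ∈ msupport π → ∀ hx : p.1 ∈ Xt, ft ⟨p.1, hx⟩ = f p.1 :=
  ⟨fun x => f x, hf.subtype hXtc.measurableSet hXt.ne' (measure_ne_top μ Xt) hπ,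
    fun _ _ _ => rfl⟩

/-- Restriction of Kantorovich potentials to a closed set of
partial mass: `μ_X̃ = μ|_X̃ / μ(X̃)`, `ν_X̃ = π(X̃ × ·)/μ(X̃)`, `c_X̃ = c|_{X̃ × Y}`. -/
theorem stmt4 {X Y : Type*}
    [TopologicalSpace X] [PolishSpace X] [MeasurableSpace X] [BorelSpace X]
    [TopologicalSpace Y] [PolishSpace Y] [MeasurableSpace Y] [BorelSpace Y]
    (c : X → Y → ℝ) (hc0 : ∀ x y, 0 ≤ c x y)
    (hccont : Continuous fun p : X × Y => c p.1 p.2)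
    (μ : Measure X) (ν : Measure Y) [IsProbabilityMeasure μ] [IsProbabilityMeasure ν]
    (hT : transportCost c μ ν < ⊤)
    (π : Measure (X × Y)) (hπ : IsOptimalPlan c μ ν π)
    (Xt : Set X) (hXtc : IsClosed Xt) (hXt : 0 < μ Xt)
    (f : X → EReal) (hf : IsKantorovichPotential c μ ν f) :
    ∃ ft : ↥Xt → EReal,
      IsKantorovichPotential (fun (x : ↥Xt) (y : Y) => c x.1 y)
        ((μ Xt)⁻¹ • Measure.comap Subtype.val μ)
        ((μ Xt)⁻¹ • Measure.map Prod.snd (π.restrict (Xt ×ˢ Set.univ))) ft ∧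
      ∀ p : X × Y, p ∈ msupport π → ∀ hx : p.1 ∈ Xt, ft ⟨p.1, hx⟩ = f p.1 :=
  stmt4_general c μ ν π hπ Xt hXtc hXt f hf
end
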